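/- arXiv:0710.1989 — 3 statements merged into one kernel-verified Lean document; each statement's English description precedes it below -/
import Mathlib

section
/- Let A be a solid involutive Banach algebra under convolution of complex sequences on a lattice Λ = Bℤ^d ⊂ ℝ^d (B an invertible d×d matrix). Then A is continuously embedded in ℓ¹(Λ); more precisely, ‖a‖_{ℓ¹(Λ)} ≤ ‖a‖_A for every a ∈ A. -/
open MeasureTheory Filter
open scoped BigOperators ENNReal NNReal ComplexConjugate Classical

noncomputable section

/-- A solid involutive Banach algebra of complex-valued sequences on an additive group `Λ`,
with multiplication given by convolution.  The field `Mem` singles out the sequences belonging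
to the algebra and `N` is the norm (whose value is only relevant on members). -/
structure SolidConvStarAlgebra (Λ : Type) [AddCommGroup Λ] : Type where
  Mem : (Λ → ℂ) → Prop
  N : (Λ → ℂ) → ℝ
  zero_mem : Mem 0
  add_mem : ∀ {a b : Λ → ℂ}, Mem a → Mem b → Mem (a + b)
  smul_mem : ∀ (c : ℂ) {a : Λ → ℂ}, Mem a → Mem (c • a)
  N_nonneg : ∀ a : Λ → ℂ, 0 ≤ N a
  N_zero : N 0 = 0
  N_eq_zero : ∀ {a : Λ → ℂ}, Mem a → N a = 0 → a = 0
  N_add_le : ∀ {a b : Λ → ℂ}, Mem a → Mem b → N (a + b) ≤ N a + N b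
  N_smul : ∀ (c : ℂ) (a : Λ → ℂ), N (c • a) = ‖c‖ * N a
  /-- Completeness: every Cauchy sequence of members converges in norm to a member. -/
  complete : ∀ f : ℕ → (Λ → ℂ), (∀ n, Mem (f n)) →
    (∀ ε : ℝ, 0 < ε → ∃ n₀ : ℕ, ∀ m n : ℕ, n₀ ≤ m → n₀ ≤ n → N (f m - f n) < ε) →
    ∃ a : Λ → ℂ, Mem a ∧ Tendsto (fun n => N (f n - a)) atTop (nhds 0)
  /-- The convolution of two members is a well-defined sequence. -/
  conv_summable : ∀ {a b : Λ → ℂ}, Mem a → Mem b →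
    ∀ lam : Λ, Summable (fun mu => a mu * b (lam - mu))
  conv_mem : ∀ {a b : Λ → ℂ}, Mem a → Mem b →
    Mem (fun lam => ∑' mu, a mu * b (lam - mu))
  /-- Submultiplicativity of the norm with respect to convolution. -/
  N_conv_le : ∀ {a b : Λ → ℂ}, Mem a → Mem b →
    N (fun lam => ∑' mu, a mu * b (lam - mu)) ≤ N a * N b
  /-- Solidity: a sequence pointwise dominated by a member is a member, with smaller norm. -/
  solid : ∀ {a b : Λ → ℂ}, Mem b → (∀ lam, ‖a lam‖ ≤ ‖b lam‖) → Mem a ∧ N a ≤ N b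
  /-- Closure under the involution `a*(λ) = conj (a (-λ))`. -/
  star_mem : ∀ {a : Λ → ℂ}, Mem a → Mem (fun lam => (starRingEnd ℂ) (a (-lam)))
  N_star_le : ∀ {a : Λ → ℂ}, Mem a → N (fun lam => (starRingEnd ℂ) (a (-lam))) ≤ N a
  /-- The standard unit sequences `δ_λ` belong to the algebra. -/
  delta_mem : ∀ lam : Λ, Mem (fun mu => if mu = lam then (1:ℂ) else 0)

/-- The additive map `k ↦ B k` from `ℤ^d` to `ℝ^d`. -/
def latticeHom {d : ℕ} (B : Matrix (Fin d) (Fin d) ℝ) : ((Fin d) → ℤ) →+ ((Fin d) → ℝ) :=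
  AddMonoidHom.mk' (fun k => B.mulVec (fun i => (k i : ℝ))) (by
    intro a b
    show B.mulVec (fun i => (((a + b) i : ℤ) : ℝ)) =
        B.mulVec (fun i => ((a i : ℤ) : ℝ)) + B.mulVec (fun i => ((b i : ℤ) : ℝ))
    have h : (fun i => (((a + b) i : ℤ) : ℝ)) =
        ((fun i => ((a i : ℤ) : ℝ)) + fun i => ((b i : ℤ) : ℝ)) := by
      funext i; simp
    rw [h, Matrix.mulVec_add])

/-- The lattice `Λ = Bℤ^d ⊂ ℝ^d`. -/
def lattice {d : ℕ} (B : Matrix (Fin d) (Fin d) ℝ) : AddSubgroup ((Fin d) → ℝ) :=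
  (latticeHom B).range

/-!
Since `δ₀` is a nonzero idempotent and `δ_λ ∗ δ_{-λ} = δ₀`, every `δ_λ` has norm at least one, so
solidity gives `|a(λ)| ≤ ‖a‖_A`. For finite `F ⊆ Λ` put `b = |a| · 1_F`. The convolution power
`b^{∗n}` is supported in the sumset `nF`, which has at most `(n+1)^{|F|}` elements; its entries sum
to `(∑_F |a|)^n` and each of them is at most `‖b^{∗n}‖_A ≤ ‖a‖_A^n`. Hence
`(∑_F |a|)^n ≤ (n+1)^{|F|} ‖a‖_A^n` for all `n`, which forces `∑_F |a| ≤ ‖a‖_A`.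
-/

open AddMonoidAlgebra Finset
open scoped Pointwise

theorem Finset.nsmul_subset_image_piFinset {M : Type*} [AddCommMonoid M] [DecidableEq M]
    (F : Finset M) (n : ℕ) :
    n • F ⊆ (Fintype.piFinset fun _ : F => range (n + 1)).image fun c => ∑ i : F, c i • (i : M) := by
  induction n with
  | zero =>
    intro x hx
    rw [zero_nsmul, mem_zero] at hx
    exact mem_image.2 ⟨0, by simp [Pi.zero_def], by simp [hx]⟩
  | succ n ih =>
    intro x hx
    rw [succ_nsmul] at hx
    obtain ⟨y, hy, z, hz, rfl⟩ := mem_add.1 hx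
    obtain ⟨c, hc, rfl⟩ := mem_image.1 (ih hy)
    refine mem_image.2 ⟨c + Pi.single ⟨z, hz⟩ 1, ?_, ?_⟩
    · simp only [Fintype.mem_piFinset, mem_range] at hc ⊢
      intro i
      have := hc i
      rw [Pi.add_apply, Pi.single_apply]
      split_ifs <;> omega
    · simp [add_smul, sum_add_distrib, Pi.single_apply]

theorem Finset.card_nsmul_le_succ_pow {M : Type*} [AddCommMonoid M] [DecidableEq M]
    (F : Finset M) (n : ℕ) : #(n • F) ≤ (n + 1) ^ #F :=
  (card_le_card (F.nsmul_subset_image_piFinset n)).trans <| card_image_le.trans <| by simp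

theorem le_of_eventually_pow_le_mul_pow {S N C : ℝ} {k : ℕ} (hN : 0 ≤ N)
    (h : ∀ᶠ n : ℕ in atTop, S ^ n ≤ C * n ^ k * N ^ n) : S ≤ N := by
  by_contra! hlt
  have hS : 0 < S := hN.trans_lt hlt
  set r := N / S
  have hr : |r| < 1 := by
    rw [abs_of_nonneg (div_nonneg hN hS.le)]
    exact (div_lt_one hS).2 hlt
  have hlim : Tendsto (fun n : ℕ => C * (n ^ k * r ^ n)) atTop (nhds 0) := by
    simpa using (tendsto_pow_const_mul_const_pow_of_abs_lt_one k hr).const_mul C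
  have hone : ∀ᶠ n : ℕ in atTop, 1 ≤ C * (n ^ k * r ^ n) := h.mono fun n hn => by
    have hrn : C * (n ^ k * r ^ n) = C * n ^ k * N ^ n / S ^ n := by
      simp only [r, div_pow]; ring
    rwa [hrn, one_le_div (pow_pos hS n)]
  exact absurd (ge_of_tendsto hlim hone) (by norm_num)

theorem AddMonoidAlgebra.support_coeff_pow_subset {R M : Type*} [Semiring R] [AddMonoid M]
    [DecidableEq M] (x : R[M]) (n : ℕ) : (x ^ n).coeff.support ⊆ n • x.coeff.support := by
  induction n with
  | zero =>
    rw [pow_zero, one_def, zero_nsmul, coeff_single]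
    exact Finsupp.support_single_subset
  | succ n ih =>
    rw [pow_succ, succ_nsmul]
    exact (support_coeff_mul_subset _ _).trans (add_subset_add ih subset_rfl)

namespace SolidConvStarAlgebra

variable {Λ : Type}

theorem coeff_single_one (lam : Λ) :
    ⇑(single lam (1 : ℂ)).coeff = fun mu => if mu = lam then 1 else 0 := by
  funext mu
  simp only [coeff_single, Finsupp.single_apply, eq_comm]

variable [AddCommGroup Λ]

def conv (a b : Λ → ℂ) : Λ → ℂ := fun lam => ∑' mu, a mu * b (lam - mu)

theorem coeff_mul_eq_conv (x y : ℂ[Λ]) : ⇑(x * y).coeff = conv ⇑x.coeff ⇑y.coeff := by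
  funext lam
  rw [coeff_mul_apply_left, conv, tsum_eq_sum (s := x.coeff.support) fun mu hmu => by
    rw [Finsupp.notMem_support_iff.1 hmu, zero_mul], Finsupp.sum]
  simp only [neg_add_eq_sub]

theorem star_coeff_single_one (lam : Λ) :
    (fun mu => (starRingEnd ℂ) ((single lam (1 : ℂ)).coeff (-mu))) =
      ⇑(single (-lam) (1 : ℂ)).coeff := by
  simp only [coeff_single_one, neg_eq_iff_eq_neg]
  funext mu
  split_ifs <;> simp

variable (A : SolidConvStarAlgebra Λ)

theorem mem_coeff_mul {x y : ℂ[Λ]} (hx : A.Mem ⇑x.coeff) (hy : A.Mem ⇑y.coeff) :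
    A.Mem ⇑(x * y).coeff := by
  rw [coeff_mul_eq_conv]; exact A.conv_mem hx hy

theorem N_coeff_mul_le {x y : ℂ[Λ]} (hx : A.Mem ⇑x.coeff) (hy : A.Mem ⇑y.coeff) :
    A.N ⇑(x * y).coeff ≤ A.N ⇑x.coeff * A.N ⇑y.coeff := by
  rw [coeff_mul_eq_conv]; exact A.N_conv_le hx hy

theorem mem_coeff_single_one (lam : Λ) : A.Mem ⇑(single lam (1 : ℂ)).coeff := by
  rw [coeff_single_one]; exact A.delta_mem lam

theorem one_le_N_coeff_single_one (lam : Λ) : 1 ≤ A.N ⇑(single lam (1 : ℂ)).coeff := by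
  set δ : Λ → Λ → ℂ := fun lam => ⇑(single lam (1 : ℂ)).coeff
  have hmul : ∀ lam nu, A.N (δ (lam + nu)) ≤ A.N (δ lam) * A.N (δ nu) := fun lam nu => by
    simpa only [δ, single_mul_single, mul_one] using
      A.N_coeff_mul_le (A.mem_coeff_single_one lam) (A.mem_coeff_single_one nu)
  have hδ₀ : 0 < A.N (δ 0) := (A.N_nonneg _).lt_of_ne fun h => by
    simpa [δ] using congrFun (A.N_eq_zero (A.mem_coeff_single_one 0) h.symm) 0
  have h₀ : 1 ≤ A.N (δ 0) := (le_mul_iff_one_le_left hδ₀).1 (by simpa using hmul 0 0)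
  have hstar : A.N (δ (-lam)) ≤ A.N (δ lam) := by
    simpa only [δ, star_coeff_single_one] using A.N_star_le (A.mem_coeff_single_one lam)
  have hsq : 1 ≤ A.N (δ lam) * A.N (δ lam) := by
    calc 1 ≤ A.N (δ 0) := h₀
      _ ≤ A.N (δ lam) * A.N (δ (-lam)) := by simpa using hmul lam (-lam)
      _ ≤ A.N (δ lam) * A.N (δ lam) := mul_le_mul_of_nonneg_left hstar (A.N_nonneg _)
  nlinarith [A.N_nonneg (δ lam)]

theorem norm_apply_le_N {a : Λ → ℂ} (ha : A.Mem a) (lam : Λ) : ‖a lam‖ ≤ A.N a := by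
  have hdom : ∀ mu, ‖(a lam • ⇑(single lam (1 : ℂ)).coeff) mu‖ ≤ ‖a mu‖ := fun mu => by
    rw [coeff_single_one]
    by_cases h : mu = lam <;> simp [h]
  calc ‖a lam‖ ≤ ‖a lam‖ * A.N ⇑(single lam (1 : ℂ)).coeff :=
        le_mul_of_one_le_right (norm_nonneg _) (A.one_le_N_coeff_single_one lam)
    _ = A.N (a lam • ⇑(single lam (1 : ℂ)).coeff) := (A.N_smul _ _).symm
    _ ≤ A.N a := (A.solid ha hdom).2

theorem mem_coeff_pow {x : ℂ[Λ]} (hx : A.Mem ⇑x.coeff) {n : ℕ} (hn : n ≠ 0) :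
    A.Mem ⇑(x ^ n).coeff ∧ A.N ⇑(x ^ n).coeff ≤ A.N ⇑x.coeff ^ n := by
  obtain ⟨n, rfl⟩ := Nat.exists_eq_add_one_of_ne_zero hn
  clear hn
  induction n with
  | zero => simpa using hx
  | succ n ih =>
    obtain ⟨hmem, hle⟩ := ih
    rw [pow_succ]
    refine ⟨A.mem_coeff_mul hmem hx, (A.N_coeff_mul_le hmem hx).trans ?_⟩
    exact mul_le_mul_of_nonneg_right hle (A.N_nonneg _)

-- `lift ℂ ℂ Λ 1` is the augmentation `x ↦ ∑ μ, x.coeff μ`, multiplicative on `ℂ[Λ]`.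
theorem norm_lift_one_pow_le {x : ℂ[Λ]} (hx : A.Mem ⇑x.coeff) {n : ℕ} (hn : n ≠ 0) :
    ‖lift ℂ ℂ Λ 1 x‖ ^ n ≤ #(n • x.coeff.support) * A.N ⇑x.coeff ^ n := by
  classical
  obtain ⟨hmem, hle⟩ := A.mem_coeff_pow hx hn
  calc ‖lift ℂ ℂ Λ 1 x‖ ^ n = ‖∑ mu ∈ (x ^ n).coeff.support, (x ^ n).coeff mu‖ := by
        rw [← norm_pow, ← map_pow, lift_apply]; simp [Finsupp.sum]
    _ ≤ ∑ mu ∈ (x ^ n).coeff.support, ‖(x ^ n).coeff mu‖ := norm_sum_le _ _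
    _ ≤ #(x ^ n).coeff.support * A.N ⇑x.coeff ^ n := by
        simpa using sum_le_card_nsmul _ _ _ fun mu _ => (A.norm_apply_le_N hmem mu).trans hle
    _ ≤ #(n • x.coeff.support) * A.N ⇑x.coeff ^ n := by
        gcongr
        · exact pow_nonneg (A.N_nonneg _) n
        · exact support_coeff_pow_subset x n

theorem norm_lift_one_le_N {x : ℂ[Λ]} (hx : A.Mem ⇑x.coeff) :
    ‖lift ℂ ℂ Λ 1 x‖ ≤ A.N ⇑x.coeff := by
  set k := #x.coeff.support
  refine le_of_eventually_pow_le_mul_pow (C := 2 ^ k) (k := k) (A.N_nonneg _) ?_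
  filter_upwards [eventually_ne_atTop 0] with n hn
  have hcard : (#(n • x.coeff.support) : ℝ) ≤ 2 ^ k * n ^ k := by
    rw [← mul_pow]
    calc (#(n • x.coeff.support) : ℝ) ≤ ((n + 1 : ℕ) : ℝ) ^ k := by
          exact_mod_cast card_nsmul_le_succ_pow _ n
      _ ≤ (2 * n) ^ k := by
          gcongr
          have : 1 ≤ (n : ℝ) := by exact_mod_cast Nat.one_le_iff_ne_zero.2 hn
          push_cast; linarith
  exact (A.norm_lift_one_pow_le hx hn).trans
    (mul_le_mul_of_nonneg_right hcard (pow_nonneg (A.N_nonneg _) n))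

theorem sum_norm_le_N {a : Λ → ℂ} (ha : A.Mem a) (F : Finset Λ) :
    ∑ lam ∈ F, ‖a lam‖ ≤ A.N a := by
  classical
  set x : ℂ[Λ] := ∑ lam ∈ F, single lam (‖a lam‖ : ℂ)
  have hcoeff : ∀ mu, x.coeff mu = if mu ∈ F then (‖a mu‖ : ℂ) else 0 := fun mu => by
    simp [x, coeff_sum, Finsupp.finsetSum_apply, Finsupp.single_apply]
  have hdom : ∀ mu, ‖x.coeff mu‖ ≤ ‖a mu‖ := fun mu => by
    rw [hcoeff]; split_ifs <;> simp
  have hlift : lift ℂ ℂ Λ 1 x = ((∑ lam ∈ F, ‖a lam‖ : ℝ) : ℂ) := by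
    simp [x, lift_single]
  obtain ⟨hmem, hle⟩ := A.solid ha hdom
  calc ∑ lam ∈ F, ‖a lam‖ = ‖lift ℂ ℂ Λ 1 x‖ := by
        rw [hlift, Complex.norm_real, Real.norm_of_nonneg (sum_nonneg fun _ _ => norm_nonneg _)]
    _ ≤ A.N ⇑x.coeff := A.norm_lift_one_le_N hmem
    _ ≤ A.N a := hle

theorem summable_norm_and_tsum_le_N {a : Λ → ℂ} (ha : A.Mem a) :
    Summable (fun lam => ‖a lam‖) ∧ ∑' lam, ‖a lam‖ ≤ A.N a := by
  have hsum := summable_of_sum_le (fun lam => norm_nonneg (a lam)) (A.sum_norm_le_N ha)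
  exact ⟨hsum, hsum.tsum_le_of_sum_le (A.sum_norm_le_N ha)⟩

end SolidConvStarAlgebra

theorem statement0_general {d : ℕ} (B : Matrix (Fin d) (Fin d) ℝ)
    (A : SolidConvStarAlgebra ↥(lattice B)) :
    ∀ a : ↥(lattice B) → ℂ, A.Mem a →
      Summable (fun lam => ‖a lam‖) ∧ ∑' lam : ↥(lattice B), ‖a lam‖ ≤ A.N a :=
  fun _ => A.summable_norm_and_tsum_le_N

/-- A solid involutive Banach algebra under convolution on a lattice
`Λ = Bℤ^d ⊂ ℝ^d` is continuously embedded in `ℓ¹(Λ)`; more precisely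
`‖a‖_{ℓ¹(Λ)} ≤ ‖a‖_A` for every `a ∈ A`. -/
theorem statement0 {d : ℕ} (B : Matrix (Fin d) (Fin d) ℝ) (hB : IsUnit B.det)
    (A : SolidConvStarAlgebra ↥(lattice B)) :
    ∀ a : ↥(lattice B) → ℂ, A.Mem a →
      Summable (fun lam => ‖a lam‖) ∧ ∑' lam : ↥(lattice B), ‖a lam‖ ≤ A.N a :=
  statement0_general B A

end
end

section
/- Let A be a solid Banach algebra under convolution of sequences on a lattice Λ ⊂ ℝ^d. Then the matrix class C_A is a Banach algebra under matrix multiplication: if A, B ∈ C_A then the product matrix AB satisfies the pointwise bound d_{AB}(μ) ≤ (d_A * d_B)(μ) for all μ ∈ Λ, hence AB ∈ C_A and ‖AB‖_{C_A} ≤ ‖A‖_{C_A}‖B‖_{C_A}. -/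
/-!
An entry of the product is `(MM')_{λ,λ-μ} = ∑_κ M_{λ,λ-κ} M'_{λ-κ,λ-μ}`, and the two factors lie on
the diagonals `κ` and `μ - κ`, so `d_{MM'}(μ) ≤ ∑_κ d_M(κ) d_{M'}(μ - κ)`. If `a, b ∈ A` dominate
`d_M, d_{M'}`, then (after passing to `|a|, |b|` by solidity) the convolution `a * b ∈ A` dominates
`d_{MM'}` and has norm at most `‖a‖ ‖b‖`; taking the infimum over `a` and `b` gives the norm bound.
-/


open MeasureTheory Filter
open scoped BigOperators ENNReal NNReal ComplexConjugate Classical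

noncomputable section

/-- A solid Banach algebra of complex-valued sequences on an additive group `Λ`,
with multiplication given by convolution.  The field `Mem` singles out the sequences
belonging to the algebra and `N` is the norm (whose value is only relevant on members). -/
structure SolidConvAlgebra (Λ : Type) [AddCommGroup Λ] : Type where
  Mem : (Λ → ℂ) → Prop
  N : (Λ → ℂ) → ℝ
  zero_mem : Mem 0
  add_mem : ∀ {a b : Λ → ℂ}, Mem a → Mem b → Mem (a + b)
  smul_mem : ∀ (c : ℂ) {a : Λ → ℂ}, Mem a → Mem (c • a)
  N_nonneg : ∀ a : Λ → ℂ, 0 ≤ N a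
  N_zero : N 0 = 0
  N_eq_zero : ∀ {a : Λ → ℂ}, Mem a → N a = 0 → a = 0
  N_add_le : ∀ {a b : Λ → ℂ}, Mem a → Mem b → N (a + b) ≤ N a + N b
  N_smul : ∀ (c : ℂ) (a : Λ → ℂ), N (c • a) = ‖c‖ * N a
  /-- Completeness: every Cauchy sequence of members converges in norm to a member. -/
  complete : ∀ f : ℕ → (Λ → ℂ), (∀ n, Mem (f n)) →
    (∀ ε : ℝ, 0 < ε → ∃ n₀ : ℕ, ∀ m n : ℕ, n₀ ≤ m → n₀ ≤ n → N (f m - f n) < ε) →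
    ∃ a : Λ → ℂ, Mem a ∧ Tendsto (fun n => N (f n - a)) atTop (nhds 0)
  /-- The convolution of two members is a well-defined sequence. -/
  conv_summable : ∀ {a b : Λ → ℂ}, Mem a → Mem b →
    ∀ lam : Λ, Summable (fun mu => a mu * b (lam - mu))
  conv_mem : ∀ {a b : Λ → ℂ}, Mem a → Mem b →
    Mem (fun lam => ∑' mu, a mu * b (lam - mu))
  /-- Submultiplicativity of the norm with respect to convolution. -/
  N_conv_le : ∀ {a b : Λ → ℂ}, Mem a → Mem b →
    N (fun lam => ∑' mu, a mu * b (lam - mu)) ≤ N a * N b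
  /-- Solidity: a sequence pointwise dominated by a member is a member, with smaller norm. -/
  solid : ∀ {a b : Λ → ℂ}, Mem b → (∀ lam, ‖a lam‖ ≤ ‖b lam‖) → Mem a ∧ N a ≤ N b

/-- The `μ`-th diagonal supremum `d_M(μ) = sup_λ |M_{λ, λ-μ}|` of a matrix `M`,
computed in `ℝ≥0∞`. -/
def diagSup {Λ : Type} [AddCommGroup Λ] (M : Λ → Λ → ℂ) (mu : Λ) : ℝ≥0∞ :=
  ⨆ lam : Λ, (‖M lam (lam - mu)‖₊ : ℝ≥0∞)

/-- Membership in the matrix algebra `C_A`: the sequence of diagonal suprema of `M` is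
dominated by a member of `A` (equivalently, by solidity, it belongs to `A`). -/
def MemCA {Λ : Type} [AddCommGroup Λ] (A : SolidConvAlgebra Λ) (M : Λ → Λ → ℂ) : Prop :=
  ∃ a : Λ → ℝ, A.Mem (fun lam => (a lam : ℂ)) ∧
    ∀ mu : Λ, diagSup M mu ≤ ENNReal.ofReal (a mu)

/-- The norm `‖M‖_{C_A} = ‖d_M‖_A` of a matrix in `C_A`, expressed as the infimum of the
`A`-norms of dominating sequences. -/
def CAnorm {Λ : Type} [AddCommGroup Λ] (A : SolidConvAlgebra Λ) (M : Λ → Λ → ℂ) : ℝ :=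
  sInf {r : ℝ | ∃ a : Λ → ℝ, A.Mem (fun lam => (a lam : ℂ)) ∧
    (∀ mu : Λ, diagSup M mu ≤ ENNReal.ofReal (a mu)) ∧ r = A.N (fun lam => (a lam : ℂ))}

/-- Multiplication of (infinite) matrices over `Λ`. -/
def matMul {Λ : Type} [AddCommGroup Λ] (M M' : Λ → Λ → ℂ) : Λ → Λ → ℂ :=
  fun lam mu => ∑' nu : Λ, M lam nu * M' nu mu

/-- No summability is needed: a non-summable entry sum of `matMul` is `0` by the `tsum`
convention. -/
theorem diagSup_matMul_le {Λ : Type} [AddCommGroup Λ] (M M' : Λ → Λ → ℂ) (mu : Λ) :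
    diagSup (matMul M M') mu ≤ ∑' nu, diagSup M nu * diagSup M' (mu - nu) := by
  refine iSup_le fun lam => ?_
  calc (‖matMul M M' lam (lam - mu)‖₊ : ℝ≥0∞)
      ≤ ∑' nu, (‖M lam nu * M' nu (lam - mu)‖₊ : ℝ≥0∞) :=
        enorm_tsum_le_tsum_enorm (f := fun nu => M lam nu * M' nu (lam - mu))
    _ = ∑' kappa, (‖M lam (lam - kappa) * M' (lam - kappa) (lam - mu)‖₊ : ℝ≥0∞) :=
        ((Equiv.subLeft lam).tsum_eq fun nu => (‖M lam nu * M' nu (lam - mu)‖₊ : ℝ≥0∞)).symm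
    _ ≤ ∑' kappa, diagSup M kappa * diagSup M' (mu - kappa) := by
        refine ENNReal.tsum_le_tsum fun kappa => ?_
        rw [nnnorm_mul, ENNReal.coe_mul]
        have hdiag : lam - mu = (lam - kappa) - (mu - kappa) := by abel
        refine mul_le_mul' (le_iSup (fun l => (‖M l (l - kappa)‖₊ : ℝ≥0∞)) lam) ?_
        rw [hdiag]
        exact le_iSup (fun l => (‖M' l (l - (mu - kappa))‖₊ : ℝ≥0∞)) (lam - kappa)

theorem Real.le_sInf_mul_sInf {S T : Set ℝ} (hS : S.Nonempty) (hT : T.Nonempty)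
    (hS₀ : ∀ r ∈ S, 0 ≤ r) (hT₀ : ∀ s ∈ T, 0 ≤ s) {x : ℝ} (h : ∀ r ∈ S, ∀ s ∈ T, x ≤ r * s) :
    x ≤ sInf S * sInf T := by
  have hle : ∀ s ∈ T, x ≤ sInf S * s := fun s hs => by
    rw [mul_comm, ← smul_eq_mul, ← Real.sInf_smul_of_nonneg (hT₀ s hs)]
    refine le_csInf hS.smul_set ?_
    rintro _ ⟨r, hr, rfl⟩
    simpa [mul_comm] using h r hr s hs
  rw [← smul_eq_mul, ← Real.sInf_smul_of_nonneg (Real.sInf_nonneg hS₀)]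
  refine le_csInf hT.smul_set ?_
  rintro _ ⟨s, hs, rfl⟩
  exact hle s hs

section Dominators

variable {Λ : Type} [AddCommGroup Λ] (A : SolidConvAlgebra Λ) {M M' : Λ → Λ → ℂ} {a b : Λ → ℝ}

theorem dominator_abs (ha : A.Mem fun l => (a l : ℂ))
    (hda : ∀ mu, diagSup M mu ≤ ENNReal.ofReal (a mu)) :
    (A.Mem fun l => ((|a l| : ℝ) : ℂ)) ∧ (∀ mu, diagSup M mu ≤ ENNReal.ofReal |a mu|) ∧
      A.N (fun l => ((|a l| : ℝ) : ℂ)) ≤ A.N fun l => (a l : ℂ) := by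
  obtain ⟨habs, hN⟩ := A.solid (a := fun l => ((|a l| : ℝ) : ℂ)) ha fun l => by simp
  exact ⟨habs, fun mu => (hda mu).trans (ENNReal.ofReal_le_ofReal (le_abs_self _)), hN⟩

theorem conv_dominator_matMul (ha₀ : ∀ l, 0 ≤ a l) (hb₀ : ∀ l, 0 ≤ b l)
    (ha : A.Mem fun l => (a l : ℂ)) (hb : A.Mem fun l => (b l : ℂ))
    (hda : ∀ mu, diagSup M mu ≤ ENNReal.ofReal (a mu))
    (hdb : ∀ mu, diagSup M' mu ≤ ENNReal.ofReal (b mu)) :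
    let c : Λ → ℝ := fun l => ∑' nu, a nu * b (l - nu)
    (A.Mem fun l => (c l : ℂ)) ∧ (∀ mu, diagSup (matMul M M') mu ≤ ENNReal.ofReal (c mu)) ∧
      A.N (fun l => (c l : ℂ)) ≤ A.N (fun l => (a l : ℂ)) * A.N fun l => (b l : ℂ) := by
  intro c
  have hc : (fun l => (c l : ℂ)) = fun l => ∑' nu, (a nu : ℂ) * (b (l - nu) : ℂ) := by
    funext l
    push_cast [c]
    rfl
  have hsum (l : Λ) : Summable fun nu => a nu * b (l - nu) := by
    exact_mod_cast A.conv_summable ha hb l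
  refine ⟨hc ▸ A.conv_mem ha hb, fun mu => ?_, hc ▸ A.N_conv_le ha hb⟩
  calc diagSup (matMul M M') mu
      ≤ ∑' nu, diagSup M nu * diagSup M' (mu - nu) := diagSup_matMul_le M M' mu
    _ ≤ ∑' nu, ENNReal.ofReal (a nu * b (mu - nu)) := by
        refine ENNReal.tsum_le_tsum fun nu => ?_
        rw [ENNReal.ofReal_mul (ha₀ nu)]
        exact mul_le_mul' (hda nu) (hdb (mu - nu))
    _ = ENNReal.ofReal (c mu) :=
        (ENNReal.ofReal_tsum_of_nonneg (fun nu => mul_nonneg (ha₀ nu) (hb₀ (mu - nu)))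
          (hsum mu)).symm

theorem exists_dominator_matMul (ha : A.Mem fun l => (a l : ℂ))
    (hda : ∀ mu, diagSup M mu ≤ ENNReal.ofReal (a mu)) (hb : A.Mem fun l => (b l : ℂ))
    (hdb : ∀ mu, diagSup M' mu ≤ ENNReal.ofReal (b mu)) :
    ∃ c : Λ → ℝ, (A.Mem fun l => (c l : ℂ)) ∧
      (∀ mu, diagSup (matMul M M') mu ≤ ENNReal.ofReal (c mu)) ∧
      A.N (fun l => (c l : ℂ)) ≤ A.N (fun l => (a l : ℂ)) * A.N fun l => (b l : ℂ) := by
  obtain ⟨ha', hda', hNa⟩ := dominator_abs A ha hda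
  obtain ⟨hb', hdb', hNb⟩ := dominator_abs A hb hdb
  obtain ⟨hc, hdc, hNc⟩ := conv_dominator_matMul A (fun l => abs_nonneg (a l))
    (fun l => abs_nonneg (b l)) ha' hb' hda' hdb'
  exact ⟨_, hc, hdc, hNc.trans (mul_le_mul hNa hNb (A.N_nonneg _) (A.N_nonneg _))⟩

theorem CAnorm_le_of_dominator (ha : A.Mem fun l => (a l : ℂ))
    (hda : ∀ mu, diagSup M mu ≤ ENNReal.ofReal (a mu)) :
    CAnorm A M ≤ A.N fun l => (a l : ℂ) :=
  csInf_le ⟨0, by rintro _ ⟨a, -, -, rfl⟩; exact A.N_nonneg _⟩ ⟨a, ha, hda, rfl⟩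

end Dominators

theorem statement5_general {d : ℕ} (B : Matrix (Fin d) (Fin d) ℝ)
    (A : SolidConvAlgebra ↥(lattice B))
    (M M' : ↥(lattice B) → ↥(lattice B) → ℂ)
    (hM : MemCA A M) (hM' : MemCA A M') :
    (∀ mu : ↥(lattice B),
        diagSup (matMul M M') mu ≤ ∑' nu : ↥(lattice B), diagSup M nu * diagSup M' (mu - nu)) ∧
    MemCA A (matMul M M') ∧
    CAnorm A (matMul M M') ≤ CAnorm A M * CAnorm A M' := by
  refine ⟨diagSup_matMul_le M M', ?_, ?_⟩
  · obtain ⟨a, ha, hda⟩ := hM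
    obtain ⟨b, hb, hdb⟩ := hM'
    obtain ⟨c, hc, hdc, -⟩ := exists_dominator_matMul A ha hda hb hdb
    exact ⟨c, hc, hdc⟩
  · refine Real.le_sInf_mul_sInf ?_ ?_ ?_ ?_ ?_
    · obtain ⟨a, ha, hda⟩ := hM
      exact ⟨_, a, ha, hda, rfl⟩
    · obtain ⟨b, hb, hdb⟩ := hM'
      exact ⟨_, b, hb, hdb, rfl⟩
    · rintro _ ⟨a, -, -, rfl⟩
      exact A.N_nonneg _
    · rintro _ ⟨b, -, -, rfl⟩
      exact A.N_nonneg _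
    rintro _ ⟨a, ha, hda, rfl⟩ _ ⟨b, hb, hdb, rfl⟩
    obtain ⟨c, hc, hdc, hNc⟩ := exists_dominator_matMul A ha hda hb hdb
    exact (CAnorm_le_of_dominator A hc hdc).trans hNc

/-- For a solid convolution Banach algebra `A` on a lattice `Λ ⊂ ℝ^d`,
the matrix class `C_A` is a Banach algebra under matrix multiplication: for `M, M' ∈ C_A`
the diagonal suprema of the product satisfy `d_{MM'} ≤ d_M * d_{M'}` pointwise, whence
`MM' ∈ C_A` and `‖MM'‖_{C_A} ≤ ‖M‖_{C_A} ‖M'‖_{C_A}`. -/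
theorem statement5 {d : ℕ} (B : Matrix (Fin d) (Fin d) ℝ) (hB : IsUnit B.det)
    (A : SolidConvAlgebra ↥(lattice B))
    (M M' : ↥(lattice B) → ↥(lattice B) → ℂ)
    (hM : MemCA A M) (hM' : MemCA A M') :
    (∀ mu : ↥(lattice B),
        diagSup (matMul M M') mu ≤ ∑' nu : ↥(lattice B), diagSup M nu * diagSup M' (mu - nu)) ∧
    MemCA A (matMul M M') ∧
    CAnorm A (matMul M M') ≤ CAnorm A M * CAnorm A M' :=
  statement5_general B A M M' hM hM'

end
end

section
/- Let A be a solid Banach algebra under convolution of sequences on a lattice Λ ⊂ ℝ^d, and let Y be a solid Banach space of sequences on Λ on which A acts boundedly by convolution, i.e., ‖a * c‖_Y ≤ ‖a‖_A ‖c‖_Y for all a ∈ A, c ∈ Y. Then every matrix A ∈ C_A acts boundedly on Y with ‖Ac‖_Y ≤ ‖A‖_{C_A} ‖c‖_Y for all c ∈ Y. In particular (taking Y = ℓ²(Λ)), C_A is a Banach subalgebra of the bounded operators on ℓ²(Λ). -/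
open MeasureTheory Filter
open scoped BigOperators ENNReal NNReal ComplexConjugate Classical

noncomputable section

/-- A solid Banach space of complex-valued sequences on `Λ`. -/
structure SolidSeqSpace (Λ : Type) [AddCommGroup Λ] : Type where
  Mem : (Λ → ℂ) → Prop
  N : (Λ → ℂ) → ℝ
  zero_mem : Mem 0
  add_mem : ∀ {a b : Λ → ℂ}, Mem a → Mem b → Mem (a + b)
  smul_mem : ∀ (c : ℂ) {a : Λ → ℂ}, Mem a → Mem (c • a)
  N_nonneg : ∀ a : Λ → ℂ, 0 ≤ N a
  N_zero : N 0 = 0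
  N_eq_zero : ∀ {a : Λ → ℂ}, Mem a → N a = 0 → a = 0
  N_add_le : ∀ {a b : Λ → ℂ}, Mem a → Mem b → N (a + b) ≤ N a + N b
  N_smul : ∀ (c : ℂ) (a : Λ → ℂ), N (c • a) = ‖c‖ * N a
  complete : ∀ f : ℕ → (Λ → ℂ), (∀ n, Mem (f n)) →
    (∀ ε : ℝ, 0 < ε → ∃ n₀ : ℕ, ∀ m n : ℕ, n₀ ≤ m → n₀ ≤ n → N (f m - f n) < ε) →
    ∃ a : Λ → ℂ, Mem a ∧ Tendsto (fun n => N (f n - a)) atTop (nhds 0)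
  solid : ∀ {a b : Λ → ℂ}, Mem b → (∀ lam, ‖a lam‖ ≤ ‖b lam‖) → Mem a ∧ N a ≤ N b

/-!
If `a ∈ A` dominates the diagonal suprema of `M`, then `|M λ μ| ≤ |a (λ - μ)|`, so
`|(M c) λ| ≤ (|a| * |c|) λ`. Solidity of `A` and `Y` and the bounded action of `A` on `Y` give
`‖M c‖_Y ≤ ‖a‖_A ‖c‖_Y`, and taking the infimum over such `a` gives `‖M‖_{C_A}`. On `ℓ²` the
same domination reduces the bound to Young's inequality `‖f * g‖₂ ≤ ‖f‖₁ ‖g‖₂` (weighted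
Cauchy–Schwarz in each row, then Fubini in `ℝ≥0∞`) together with `‖a‖₁ ≤ ‖a‖_A`.
-/

namespace ENNReal

theorem sq_tsum_mul_le {ι : Type*} (u v : ι → ℝ≥0∞) :
    (∑' i, u i * v i) ^ 2 ≤ (∑' i, u i ^ 2) * ∑' i, v i ^ 2 := by
  have rpow_two : ∀ x : ℝ≥0∞, x ^ (2 : ℝ) = x ^ 2 := fun x => by
    rw [← ENNReal.rpow_natCast]; norm_num
  have holder : ∑' i, u i * v i ≤
      (∑' i, u i ^ 2) ^ (1 / 2 : ℝ) * (∑' i, v i ^ 2) ^ (1 / 2 : ℝ) := by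
    rw [ENNReal.tsum_eq_iSup_sum]
    refine iSup_le fun s => (inner_le_Lp_mul_Lq s u v .two_two).trans ?_
    simp_rw [rpow_two]
    gcongr <;> exact ENNReal.sum_le_tsum s
  calc (∑' i, u i * v i) ^ 2
      ≤ ((∑' i, u i ^ 2) ^ (1 / 2 : ℝ) * (∑' i, v i ^ 2) ^ (1 / 2 : ℝ)) ^ 2 := by gcongr
    _ = (∑' i, u i ^ 2) * ∑' i, v i ^ 2 := by
      rw [mul_pow, ← rpow_two, ← rpow_two, ← ENNReal.rpow_mul, ← ENNReal.rpow_mul]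
      norm_num

theorem sq_tsum_mul_le_tsum_mul_tsum_mul_sq {ι : Type*} (w x : ι → ℝ≥0∞) :
    (∑' i, w i * x i) ^ 2 ≤ (∑' i, w i) * ∑' i, w i * x i ^ 2 := by
  have sqrt_sq : ∀ i, (w i ^ (1 / 2 : ℝ)) ^ 2 = w i := fun i => by
    rw [← ENNReal.rpow_natCast, ← ENNReal.rpow_mul]; norm_num
  have split : ∀ i, w i * x i = w i ^ (1 / 2 : ℝ) * (w i ^ (1 / 2 : ℝ) * x i) := fun i => by
    rw [← mul_assoc, ← sq, sqrt_sq]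
  simpa only [← split, mul_pow, sqrt_sq] using
    sq_tsum_mul_le (fun i => w i ^ (1 / 2 : ℝ)) fun i => w i ^ (1 / 2 : ℝ) * x i

theorem tsum_sq_conv_le {Λ : Type*} [AddCommGroup Λ] (f g : Λ → ℝ≥0∞) :
    ∑' lam, (∑' mu, f (lam - mu) * g mu) ^ 2 ≤ (∑' nu, f nu) ^ 2 * ∑' mu, g mu ^ 2 := by
  set S := ∑' nu, f nu
  have row_sum : ∀ lam : Λ, ∑' mu, f (lam - mu) = S := fun lam => by
    simpa using (Equiv.subLeft lam).tsum_eq f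
  have col_sum : ∀ mu : Λ, ∑' lam, f (lam - mu) = S := fun mu => by
    simpa using ((Equiv.addRight mu).tsum_eq fun lam => f (lam - mu)).symm
  calc ∑' lam, (∑' mu, f (lam - mu) * g mu) ^ 2
      ≤ ∑' lam, S * ∑' mu, f (lam - mu) * g mu ^ 2 := by
        gcongr with lam
        rw [← row_sum lam]
        exact sq_tsum_mul_le_tsum_mul_tsum_mul_sq _ _
    _ = S * ∑' mu, (∑' lam, f (lam - mu)) * g mu ^ 2 := by
        rw [ENNReal.tsum_mul_left, ENNReal.tsum_comm]
        simp only [ENNReal.tsum_mul_right]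
    _ = S ^ 2 * ∑' mu, g mu ^ 2 := by
        simp only [col_sum, ENNReal.tsum_mul_left]
        ring

end ENNReal

theorem summable_of_tsum_ofReal_ne_top {ι : Type*} {h : ι → ℝ} (hh : ∀ i, 0 ≤ h i)
    (H : ∑' i, ENNReal.ofReal (h i) ≠ ⊤) : Summable h := by
  simpa only [ENNReal.toReal_ofReal (hh _)] using ENNReal.summable_toReal H

theorem summable_conv_and_tsum_sq_conv_le {Λ : Type*} [AddCommGroup Λ] {f g : Λ → ℝ}
    (hf0 : ∀ nu, 0 ≤ f nu) (hg0 : ∀ mu, 0 ≤ g mu) (hf : Summable f)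
    (hg : Summable fun mu => g mu ^ 2) :
    (∀ lam, Summable fun mu => f (lam - mu) * g mu) ∧
    Summable (fun lam => (∑' mu, f (lam - mu) * g mu) ^ 2) ∧
    ∑' lam, (∑' mu, f (lam - mu) * g mu) ^ 2 ≤ (∑' nu, f nu) ^ 2 * ∑' mu, g mu ^ 2 := by
  set F : Λ → ℝ≥0∞ := fun nu => ENNReal.ofReal (f nu)
  set G : Λ → ℝ≥0∞ := fun mu => ENNReal.ofReal (g mu)
  have young_eq : (∑' nu, F nu) ^ 2 * ∑' mu, G mu ^ 2 =
      ENNReal.ofReal ((∑' nu, f nu) ^ 2 * ∑' mu, g mu ^ 2) := by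
    simp only [F, G, ← ENNReal.ofReal_pow (hg0 _), ← ENNReal.ofReal_tsum_of_nonneg hf0 hf,
      ← ENNReal.ofReal_tsum_of_nonneg (fun _ => sq_nonneg _) hg,
      ← ENNReal.ofReal_pow (tsum_nonneg hf0), ← ENNReal.ofReal_mul (sq_nonneg _)]
  have young := (ENNReal.tsum_sq_conv_le F G).trans_eq young_eq
  have young_ne_top := ne_top_of_le_ne_top ENNReal.ofReal_ne_top young
  have hconv : ∀ lam, Summable fun mu => f (lam - mu) * g mu := fun lam => by
    refine summable_of_tsum_ofReal_ne_top (fun _ => mul_nonneg (hf0 _) (hg0 _)) ?_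
    simp only [ENNReal.ofReal_mul (hf0 _)]
    exact (ENNReal.pow_ne_top_iff.mp (ENNReal.ne_top_of_tsum_ne_top young_ne_top lam)).resolve_right
      two_ne_zero
  have ofReal_sq_conv : ∀ lam, ENNReal.ofReal ((∑' mu, f (lam - mu) * g mu) ^ 2) =
      (∑' mu, F (lam - mu) * G mu) ^ 2 := fun lam => by
    rw [ENNReal.ofReal_pow (tsum_nonneg fun _ => mul_nonneg (hf0 _) (hg0 _)),
      ENNReal.ofReal_tsum_of_nonneg (fun _ => mul_nonneg (hf0 _) (hg0 _)) (hconv lam)]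
    simp only [F, G, ENNReal.ofReal_mul (hf0 _)]
  have hsq : Summable fun lam => (∑' mu, f (lam - mu) * g mu) ^ 2 :=
    summable_of_tsum_ofReal_ne_top (fun _ => sq_nonneg _) (by simpa only [ofReal_sq_conv])
  refine ⟨hconv, hsq, ?_⟩
  rw [← ENNReal.ofReal_le_ofReal_iff (by positivity),
    ENNReal.ofReal_tsum_of_nonneg (fun _ => sq_nonneg _) hsq]
  simpa only [ofReal_sq_conv] using young

section MatrixAction

variable {Λ : Type} [AddCommGroup Λ] {M : Λ → Λ → ℂ} {a : Λ → ℝ}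

-- `ENNReal.ofReal` sends negative values to `0`, so it is `|a|`, not `a`, that dominates `M`.
theorem norm_le_abs_of_diagSup_le (hdom : ∀ mu, diagSup M mu ≤ ENNReal.ofReal (a mu))
    (lam mu : Λ) : ‖M lam mu‖ ≤ |a (lam - mu)| := by
  have entry_le : ENNReal.ofReal ‖M lam mu‖ ≤ diagSup M (lam - mu) :=
    le_iSup_of_le lam (by rw [sub_sub_cancel, ofReal_norm, enorm_eq_nnnorm])
  rw [← ENNReal.ofReal_le_ofReal_iff (abs_nonneg _)]
  exact entry_le.trans ((hdom _).trans (ENNReal.ofReal_le_ofReal (le_abs_self _)))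

theorem summable_and_norm_tsum_le_of_diagSup_le
    (hdom : ∀ mu, diagSup M mu ≤ ENNReal.ofReal (a mu)) {c : Λ → ℂ} {lam : Λ}
    (hsum : Summable fun mu => |a (lam - mu)| * ‖c mu‖) :
    Summable (fun mu => M lam mu * c mu) ∧
    ‖∑' mu, M lam mu * c mu‖ ≤ ∑' mu, |a (lam - mu)| * ‖c mu‖ := by
  have term_le : ∀ mu, ‖M lam mu * c mu‖ ≤ |a (lam - mu)| * ‖c mu‖ := fun mu => by
    rw [norm_mul]
    exact mul_le_mul_of_nonneg_right (norm_le_abs_of_diagSup_le hdom lam mu) (norm_nonneg _)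
  have hnorm : Summable fun mu => ‖M lam mu * c mu‖ :=
    .of_nonneg_of_le (fun _ => norm_nonneg _) term_le hsum
  exact ⟨hnorm.of_norm,
    (norm_tsum_le_tsum_norm hnorm).trans (hnorm.tsum_le_tsum term_le hsum)⟩

theorem solidSeqSpace_bound_of_diagSup_le (A : SolidConvAlgebra Λ) (Y : SolidSeqSpace Λ)
    (hAct : ∀ a c : Λ → ℂ, A.Mem a → Y.Mem c →
      (∀ lam : Λ, Summable (fun mu => a (lam - mu) * c mu)) ∧
      Y.Mem (fun lam => ∑' mu : Λ, a (lam - mu) * c mu) ∧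
      Y.N (fun lam => ∑' mu : Λ, a (lam - mu) * c mu) ≤ A.N a * Y.N c)
    (ha : A.Mem fun lam => (a lam : ℂ)) (hdom : ∀ mu, diagSup M mu ≤ ENNReal.ofReal (a mu))
    {c : Λ → ℂ} (hc : Y.Mem c) :
    (∀ lam : Λ, Summable (fun mu => M lam mu * c mu)) ∧
    Y.Mem (fun lam => ∑' mu : Λ, M lam mu * c mu) ∧
    Y.N (fun lam => ∑' mu : Λ, M lam mu * c mu) ≤ A.N (fun lam => (a lam : ℂ)) * Y.N c := by
  obtain ⟨ha'mem, ha'N⟩ := A.solid (a := fun nu => ((|a nu| : ℝ) : ℂ)) ha (by simp)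
  obtain ⟨hc'mem, hc'N⟩ := Y.solid (a := fun mu => ((‖c mu‖ : ℝ) : ℂ)) hc (by simp)
  obtain ⟨hconv, hconv_mem, hconv_N⟩ := hAct _ _ ha'mem hc'mem
  have hreal : ∀ lam, Summable fun mu => |a (lam - mu)| * ‖c mu‖ := fun lam => by
    simpa only [← Complex.ofReal_mul, Complex.summable_ofReal] using hconv lam
  have hpt := fun lam => summable_and_norm_tsum_le_of_diagSup_le hdom (hreal lam)
  obtain ⟨hmem, hN⟩ := Y.solid (a := fun lam => ∑' mu, M lam mu * c mu) hconv_mem fun lam => by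
    simp only [← Complex.ofReal_mul, ← Complex.ofReal_tsum, Complex.norm_real, Real.norm_eq_abs]
    exact (hpt lam).2.trans (le_abs_self _)
  exact ⟨fun lam => (hpt lam).1, hmem,
    hN.trans (hconv_N.trans (mul_le_mul ha'N hc'N (Y.N_nonneg _) (A.N_nonneg _)))⟩

theorem l2_bound_of_diagSup_le (hdom : ∀ mu, diagSup M mu ≤ ENNReal.ofReal (a mu))
    (ha : Summable fun nu => |a nu|) {c : Λ → ℂ} (hc : Summable fun mu => ‖c mu‖ ^ 2) :
    (∀ lam : Λ, Summable (fun mu => M lam mu * c mu)) ∧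
    Summable (fun lam : Λ => ‖∑' mu : Λ, M lam mu * c mu‖ ^ 2) ∧
    Real.sqrt (∑' lam : Λ, ‖∑' mu : Λ, M lam mu * c mu‖ ^ 2) ≤
      (∑' nu, |a nu|) * Real.sqrt (∑' mu : Λ, ‖c mu‖ ^ 2) := by
  obtain ⟨hconv, hconv_sq, hyoung⟩ :=
    summable_conv_and_tsum_sq_conv_le (fun _ => abs_nonneg _) (fun _ => norm_nonneg _) ha hc
  have hpt := fun lam => summable_and_norm_tsum_le_of_diagSup_le hdom (hconv lam)
  have sq_le : ∀ lam, ‖∑' mu, M lam mu * c mu‖ ^ 2 ≤ (∑' mu, |a (lam - mu)| * ‖c mu‖) ^ 2 :=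
    fun lam => pow_le_pow_left₀ (norm_nonneg _) (hpt lam).2 2
  have hsq := Summable.of_nonneg_of_le (fun _ => sq_nonneg _) sq_le hconv_sq
  refine ⟨fun lam => (hpt lam).1, hsq, ?_⟩
  calc Real.sqrt (∑' lam, ‖∑' mu, M lam mu * c mu‖ ^ 2)
      ≤ Real.sqrt ((∑' nu, |a nu|) ^ 2 * ∑' mu, ‖c mu‖ ^ 2) :=
        Real.sqrt_le_sqrt ((hsq.tsum_le_tsum sq_le hconv_sq).trans hyoung)
    _ = (∑' nu, |a nu|) * Real.sqrt (∑' mu, ‖c mu‖ ^ 2) := by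
        rw [Real.sqrt_mul (sq_nonneg _), Real.sqrt_sq (tsum_nonneg fun _ => abs_nonneg _)]

theorem le_CAnorm_mul {A : SolidConvAlgebra Λ} (hM : MemCA A M) {L R : ℝ} (hR : 0 ≤ R)
    (h : ∀ a : Λ → ℝ, A.Mem (fun lam => (a lam : ℂ)) →
      (∀ mu, diagSup M mu ≤ ENNReal.ofReal (a mu)) → L ≤ A.N (fun lam => (a lam : ℂ)) * R) :
    L ≤ CAnorm A M * R := by
  obtain ⟨a, ha, hdom⟩ := hM
  rcases hR.eq_or_lt with rfl | hR
  · simpa using h a ha hdom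
  · rw [← div_le_iff₀ hR]
    exact le_csInf ⟨_, a, ha, hdom, rfl⟩ fun r ⟨a, ha, hdom, hr⟩ =>
      (div_le_iff₀ hR).mpr (hr ▸ h a ha hdom)

end MatrixAction

theorem statement6_general {d : ℕ} (B : Matrix (Fin d) (Fin d) ℝ)
    (A : SolidConvAlgebra ↥(lattice B)) (Y : SolidSeqSpace ↥(lattice B))
    (hAct : ∀ a c : ↥(lattice B) → ℂ, A.Mem a → Y.Mem c →
      (∀ lam : ↥(lattice B), Summable (fun mu => a (lam - mu) * c mu)) ∧
      Y.Mem (fun lam => ∑' mu : ↥(lattice B), a (lam - mu) * c mu) ∧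
      Y.N (fun lam => ∑' mu : ↥(lattice B), a (lam - mu) * c mu) ≤ A.N a * Y.N c) :
    (∀ M : ↥(lattice B) → ↥(lattice B) → ℂ, MemCA A M →
      ∀ c : ↥(lattice B) → ℂ, Y.Mem c →
        (∀ lam : ↥(lattice B), Summable (fun mu => M lam mu * c mu)) ∧
        Y.Mem (fun lam => ∑' mu : ↥(lattice B), M lam mu * c mu) ∧
        Y.N (fun lam => ∑' mu : ↥(lattice B), M lam mu * c mu) ≤ CAnorm A M * Y.N c) ∧
    ((∀ a : ↥(lattice B) → ℂ, A.Mem a →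
        Summable (fun lam => ‖a lam‖) ∧ ∑' lam : ↥(lattice B), ‖a lam‖ ≤ A.N a) →
      ∀ M : ↥(lattice B) → ↥(lattice B) → ℂ, MemCA A M →
        ∀ c : ↥(lattice B) → ℂ, Summable (fun mu => ‖c mu‖ ^ 2) →
          (∀ lam : ↥(lattice B), Summable (fun mu => M lam mu * c mu)) ∧
          Summable (fun lam : ↥(lattice B) =>
            ‖∑' mu : ↥(lattice B), M lam mu * c mu‖ ^ 2) ∧
          Real.sqrt (∑' lam : ↥(lattice B), ‖∑' mu : ↥(lattice B), M lam mu * c mu‖ ^ 2) ≤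
            CAnorm A M * Real.sqrt (∑' mu : ↥(lattice B), ‖c mu‖ ^ 2)) := by
  refine ⟨fun M hM c hc => ?_, fun hl1 M hM c hc => ?_⟩
  · obtain ⟨a, ha, hdom⟩ := hM
    obtain ⟨hsum, hmem, -⟩ := solidSeqSpace_bound_of_diagSup_le A Y hAct ha hdom hc
    exact ⟨hsum, hmem, le_CAnorm_mul ⟨a, ha, hdom⟩ (Y.N_nonneg c) fun a ha hdom =>
      (solidSeqSpace_bound_of_diagSup_le A Y hAct ha hdom hc).2.2⟩
  · have l1_bound : ∀ a : ↥(lattice B) → ℝ, A.Mem (fun lam => (a lam : ℂ)) →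
        Summable (fun nu => |a nu|) ∧ ∑' nu, |a nu| ≤ A.N (fun lam => (a lam : ℂ)) := fun a ha => by
      simpa only [Complex.norm_real, Real.norm_eq_abs] using hl1 _ ha
    obtain ⟨a, ha, hdom⟩ := hM
    obtain ⟨hsum, hsq, -⟩ := l2_bound_of_diagSup_le hdom (l1_bound a ha).1 hc
    refine ⟨hsum, hsq, le_CAnorm_mul ⟨a, ha, hdom⟩ (Real.sqrt_nonneg _) fun a ha hdom => ?_⟩
    exact (l2_bound_of_diagSup_le hdom (l1_bound a ha).1 hc).2.2.trans
      (by gcongr; exact (l1_bound a ha).2)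

/-- If the solid convolution Banach algebra `A` acts boundedly by
convolution on a solid Banach sequence space `Y` over the lattice `Λ`
(`‖a * c‖_Y ≤ ‖a‖_A ‖c‖_Y`), then every matrix `M ∈ C_A` acts boundedly on `Y` with
`‖Mc‖_Y ≤ ‖M‖_{C_A} ‖c‖_Y`.  In particular (taking `Y = ℓ²(Λ)`, using that
`A ⊆ ℓ¹(Λ)`), `C_A` acts boundedly on `ℓ²(Λ)`. -/
theorem statement6 {d : ℕ} (B : Matrix (Fin d) (Fin d) ℝ) (hB : IsUnit B.det)
    (A : SolidConvAlgebra ↥(lattice B)) (Y : SolidSeqSpace ↥(lattice B))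
    (hAct : ∀ a c : ↥(lattice B) → ℂ, A.Mem a → Y.Mem c →
      (∀ lam : ↥(lattice B), Summable (fun mu => a (lam - mu) * c mu)) ∧
      Y.Mem (fun lam => ∑' mu : ↥(lattice B), a (lam - mu) * c mu) ∧
      Y.N (fun lam => ∑' mu : ↥(lattice B), a (lam - mu) * c mu) ≤ A.N a * Y.N c) :
    (∀ M : ↥(lattice B) → ↥(lattice B) → ℂ, MemCA A M →
      ∀ c : ↥(lattice B) → ℂ, Y.Mem c →
        (∀ lam : ↥(lattice B), Summable (fun mu => M lam mu * c mu)) ∧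
        Y.Mem (fun lam => ∑' mu : ↥(lattice B), M lam mu * c mu) ∧
        Y.N (fun lam => ∑' mu : ↥(lattice B), M lam mu * c mu) ≤ CAnorm A M * Y.N c) ∧
    ((∀ a : ↥(lattice B) → ℂ, A.Mem a →
        Summable (fun lam => ‖a lam‖) ∧ ∑' lam : ↥(lattice B), ‖a lam‖ ≤ A.N a) →
      ∀ M : ↥(lattice B) → ↥(lattice B) → ℂ, MemCA A M →
        ∀ c : ↥(lattice B) → ℂ, Summable (fun mu => ‖c mu‖ ^ 2) →
          (∀ lam : ↥(lattice B), Summable (fun mu => M lam mu * c mu)) ∧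
          Summable (fun lam : ↥(lattice B) =>
            ‖∑' mu : ↥(lattice B), M lam mu * c mu‖ ^ 2) ∧
          Real.sqrt (∑' lam : ↥(lattice B), ‖∑' mu : ↥(lattice B), M lam mu * c mu‖ ^ 2) ≤
            CAnorm A M * Real.sqrt (∑' mu : ↥(lattice B), ‖c mu‖ ^ 2)) :=
  statement6_general B A Y hAct

end
end
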